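/- arXiv:1608.03424 — 4 statements merged into one kernel-verified Lean document; each statement's English description precedes it below -/
import Mathlib

section
/- The homeomorphic embedding relation over a finite signature is a well-quasi-order: for every infinite sequence of terms t₁, t₂, … over a finite signature there exist indices j < k such that t j ⊴ t k (the sequence is self-embedding). In particular, any sequence of terms in which no later term embeds an earlier one is necessarily finite, so the embedding whistle guarantees termination of unfolding. -/
inductive Term (α : Type) : Type
  | mk : α → List (Term α) → Term α

inductive Emb {α : Type} : Term α → Term α → Prop
  | dive {t s : Term α} {a : α} {ss : List (Term α)} :
      s ∈ ss → Emb t s → Emb t (Term.mk a ss)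
  | couple {a : α} {ts ss : List (Term α)} :
      List.SublistForall₂ Emb ts ss → Emb (Term.mk a ts) (Term.mk a ss)

namespace KruskalAux

variable {α : Type}

def Term.label : Term α → α
  | .mk a _ => a

def Term.args : Term α → List (Term α)
  | .mk _ ts => ts

theorem term_eq (t : Term α) : t = Term.mk (Term.label t) (Term.args t) := by
  cases t; rfl

theorem sizeOf_mem_args_lt {s : Term α} {a : α} {ts : List (Term α)} (h : s ∈ ts) :
    sizeOf s < sizeOf (Term.mk a ts) := by
  have := List.sizeOf_lt_of_mem h
  simp only [Term.mk.sizeOf_spec]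
  omega

theorem sublistForall₂_refl {l : List (Term α)} (h : ∀ x ∈ l, Emb x x) :
    List.SublistForall₂ Emb l l := by
  induction l with
  | nil => exact List.SublistForall₂.nil
  | cons a l ih =>
      exact List.SublistForall₂.cons (h a (List.mem_cons_self))
        (ih fun x hx => h x (List.mem_cons_of_mem a hx))

theorem emb_refl_aux : ∀ (n : ℕ) (t : Term α), sizeOf t = n → Emb t t := by
  intro n
  induction n using Nat.strong_induction_on with
  | _ n ih =>
      intro t ht
      cases t with
      | mk a ts =>
          exact Emb.couple (sublistForall₂_refl fun x hx =>
            ih (sizeOf x) (ht ▸ sizeOf_mem_args_lt hx) x rfl)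

theorem emb_refl (t : Term α) : Emb t t := emb_refl_aux (sizeOf t) t rfl

theorem sublistForall₂_mem {l₁ l₂ : List (Term α)} (h : List.SublistForall₂ Emb l₁ l₂)
    {x : Term α} (hx : x ∈ l₁) : ∃ y ∈ l₂, Emb x y := by
  induction h with
  | nil => simp at hx
  | cons hr _ ih =>
      rcases List.mem_cons.1 hx with rfl | hx'
      · exact ⟨_, List.mem_cons_self, hr⟩
      · obtain ⟨y, hy, hxy⟩ := ih hx'
        exact ⟨y, List.mem_cons_of_mem _ hy, hxy⟩
  | cons_right _ ih =>
      obtain ⟨y, hy, hxy⟩ := ih hx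
      exact ⟨y, List.mem_cons_of_mem _ hy, hxy⟩

theorem sublistForall₂_trans_aux {l₂ l₃ : List (Term α)}
    (h23 : List.SublistForall₂ Emb l₂ l₃)
    (H : ∀ c ∈ l₃, ∀ b t, Emb t b → Emb b c → Emb t c) :
    ∀ {l₁ : List (Term α)}, List.SublistForall₂ Emb l₁ l₂ →
      List.SublistForall₂ Emb l₁ l₃ := by
  induction h23 with
  | nil =>
      intro l₁ h12
      cases h12
      exact List.SublistForall₂.nil
  | @cons b c l₂' l₃' hbc _ ih =>
      intro l₁ h12
      cases h12 with
      | nil => exact List.SublistForall₂.nil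
      | cons hab h12' =>
          exact List.SublistForall₂.cons
            (H c (List.mem_cons_self) b _ hab hbc)
            (ih (fun c' hc' => H c' (List.mem_cons_of_mem _ hc')) h12')
      | cons_right h12' =>
          exact List.SublistForall₂.cons_right
            (ih (fun c' hc' => H c' (List.mem_cons_of_mem _ hc')) h12')
  | @cons_right c l₂' l₃' _ ih =>
      intro l₁ h12
      exact List.SublistForall₂.cons_right
        (ih (fun c' hc' => H c' (List.mem_cons_of_mem _ hc')) h12)

theorem emb_trans_aux : ∀ (n : ℕ) (u : Term α), sizeOf u = n →
    ∀ t s, Emb t s → Emb s u → Emb t u := by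
  intro n
  induction n using Nat.strong_induction_on with
  | _ n IH => ?_
  intro u hu t s hts hsu
  have ih : ∀ u' : Term α, sizeOf u' < sizeOf u → ∀ t s, Emb t s → Emb s u' → Emb t u' :=
    fun u' h => IH (sizeOf u') (hu ▸ h) u' rfl
  cases hsu with
  | dive hmem hsu' =>
      exact Emb.dive hmem (ih _ (sizeOf_mem_args_lt hmem) _ _ hts hsu')
  | @couple a ts' us h2 =>
      cases hts with
      | dive hmem hts' =>
          obtain ⟨y, hy, hxy⟩ := sublistForall₂_mem h2 hmem
          exact Emb.dive hy (ih y (sizeOf_mem_args_lt hy) _ _ hts' hxy)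
      | couple h1 =>
          exact Emb.couple (sublistForall₂_trans_aux h2
            (fun c hc b t htb hbc => ih c (sizeOf_mem_args_lt hc) t b htb hbc) h1)

theorem emb_trans : ∀ (u t s : Term α), Emb t s → Emb s u → Emb t u :=
  fun u => emb_trans_aux (sizeOf u) u rfl

instance : IsRefl (Term α) Emb := ⟨emb_refl⟩
instance : IsTrans (Term α) Emb := ⟨fun _ _ u h1 h2 => emb_trans u _ _ h1 h2⟩
instance : IsPreorder (Term α) Emb where
  refl := emb_refl
  trans := fun _ _ u h1 h2 => emb_trans u _ _ h1 h2

open Set.PartiallyWellOrderedOn in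
theorem emb_pwo [Finite α] : (Set.univ : Set (Term α)).PartiallyWellOrderedOn Emb := by
  rw [iff_not_exists_isMinBadSeq (sizeOf : Term α → ℕ)]
  rintro ⟨f, hf1, hf2⟩
  -- The set of immediate subterms of the minimal bad sequence is PWO.
  have hS : {s : Term α | ∃ n, s ∈ Term.args (f n)}.PartiallyWellOrderedOn Emb := by
    rw [Set.partiallyWellOrderedOn_iff_exists_lt]
    intro g hg
    by_contra hcon
    push_neg at hcon
    choose ν hν using hg
    set N := sInf (Set.range ν) with hN
    obtain ⟨i₀, hi₀⟩ := Nat.sInf_mem (Set.range_nonempty ν)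
    have hνN : ∀ i, N ≤ ν i := fun i => Nat.sInf_le ⟨i, rfl⟩
    set F : ℕ → Term α := fun m => if m < N then f m else g (i₀ + (m - N)) with hF
    have hFbad : IsBadSeq Emb Set.univ F := by
      refine ⟨fun n => Set.mem_univ _, fun m k hmk hembk => ?_⟩
      by_cases hk : k < N
      · rw [hF] at hembk
        simp only [if_pos hk, if_pos (hmk.trans hk)] at hembk
        exact hf1.2 m k hmk hembk
      · by_cases hm : m < N
        · rw [hF] at hembk
          simp only [if_pos hm, if_neg hk] at hembk
          set j := i₀ + (k - N) with hj
          have hmem : g j ∈ Term.args (f (ν j)) := hν j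
          have : Emb (f m) (f (ν j)) := by
            rw [term_eq (f (ν j))]
            exact Emb.dive hmem hembk
          exact hf1.2 m (ν j) (lt_of_lt_of_le hm (hνN j)) this
        · rw [hF] at hembk
          simp only [if_neg hm, if_neg hk] at hembk
          exact hcon (i₀ + (m - N)) (i₀ + (k - N)) (by omega) hembk
    have hlt : sizeOf (F N) < sizeOf (f N) := by
      have : F N = g i₀ := by simp [hF]
      rw [this]
      have hmem : g i₀ ∈ Term.args (f N) := by rw [hN, ← hi₀]; exact hν i₀
      rw [term_eq (f N)]
      exact sizeOf_mem_args_lt hmem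
    exact hf2 N F (fun m hm => by simp [hF, if_pos hm]) hlt hFbad
  -- Higman's lemma.
  have hL := partiallyWellOrderedOn_sublistForall₂ Emb hS
  -- Finitely many labels.
  have hA : (Set.univ : Set α).PartiallyWellOrderedOn (· = ·) :=
    Set.finite_univ.partiallyWellOrderedOn
  have hP := hA.prod hL
  have hmem : ∀ n, (Term.label (f n), Term.args (f n)) ∈
      (Set.univ ×ˢ {l : List (Term α) | ∀ x, x ∈ l → x ∈ {s | ∃ n, s ∈ Term.args (f n)}}) := by
    intro n
    refine ⟨Set.mem_univ _, fun x hx => ⟨n, hx⟩⟩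
  obtain ⟨m, n, hmn, hlab, hargs⟩ :=
    hP.exists_lt (f := fun n => (Term.label (f n), Term.args (f n))) hmem
  refine hf1.2 m n hmn ?_
  rw [term_eq (f m), term_eq (f n)]
  simp only at hlab hargs
  rw [hlab]
  exact Emb.couple hargs

end KruskalAux

theorem emb_wqo {α : Type} [Finite α] (t : ℕ → Term α) :
    ∃ j k, j < k ∧ Emb (t j) (t k) := by
  obtain ⟨j, k, hjk, h⟩ := KruskalAux.emb_pwo.exists_lt (f := t) (fun n => Set.mem_univ _)
  exact ⟨j, k, hjk, h⟩
end

section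
/- Language characterization of the specialized parser produced by partial evaluation: for every string l, accInit l = true if and only if there exist m and n with l = List.replicate m z ++ List.replicate n o, and accS l = true if and only if there exists n with l = List.replicate n o. That is, the specialized parser recognizes exactly the language (0)*(1)*. -/
namespace PEpaper

inductive Sym : Type
  | z : Sym
  | o : Sym

def accS : List Sym → Bool
  | [] => true
  | .o :: l => accS l
  | _ => false

def accInit : List Sym → Bool
  | [] => true
  | [.o] => true
  | .z :: l => accInit l
  | .o :: .o :: l => accS l
  | _ => false

lemma accS_iff (l : List Sym) : accS l = true ↔ ∃ n, l = List.replicate n Sym.o := by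
  induction l with
  | nil => simp [accS, List.replicate]
  | cons a l ih =>
    cases a with
    | z =>
      simp only [accS]
      constructor
      · intro h; cases h
      · rintro ⟨n, hn⟩
        cases n with
        | zero => simp at hn
        | succ n => simp [List.replicate_succ] at hn
    | o =>
      simp only [accS, ih]
      constructor
      · rintro ⟨n, rfl⟩; exact ⟨n + 1, by simp [List.replicate_succ]⟩
      · rintro ⟨n, hn⟩
        cases n with
        | zero => simp at hn
        | succ n =>
          simp [List.replicate_succ] at hn
          exact ⟨n, hn⟩

lemma accInit_iff (l : List Sym) :
    accInit l = true ↔ ∃ m n, l = List.replicate m Sym.z ++ List.replicate n Sym.o := by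
  induction l using accInit.induct with
  | case1 => simp [accInit, List.replicate]
  | case2 =>
    simp [accInit]; exact ⟨0, 1, rfl⟩
  | case3 l ih =>
    simp only [accInit, ih]
    constructor
    · rintro ⟨m, n, rfl⟩; exact ⟨m + 1, n, by simp [List.replicate_succ]⟩
    · rintro ⟨m, n, hn⟩
      cases m with
      | zero =>
        cases n with
        | zero => simp at hn
        | succ n => simp [List.replicate_succ] at hn
      | succ m =>
        simp [List.replicate_succ] at hn
        exact ⟨m, n, hn⟩
  | case4 l =>
    simp only [accInit, accS_iff]
    constructor
    · rintro ⟨n, rfl⟩; exact ⟨0, n + 2, by simp [List.replicate_succ]⟩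
    · rintro ⟨m, n, hn⟩
      cases m with
      | zero =>
        cases n with
        | zero => simp at hn
        | succ n =>
          cases n with
          | zero => simp at hn
          | succ n =>
            simp [List.replicate_succ] at hn
            exact ⟨n, hn⟩
      | succ m => simp [List.replicate_succ] at hn
  | case5 l h1 h2 h3 h4 =>
    constructor
    · intro h
      exfalso
      cases l with
      | nil => exact h1 rfl
      | cons a l =>
        cases a with
        | z => exact h3 l rfl
        | o =>
          cases l with
          | nil => exact h2 rfl
          | cons b l =>
            cases b with
            | z => simp [accInit] at h
            | o => exact h4 l rfl
    · rintro ⟨m, n, hn⟩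
      exfalso
      cases l with
      | nil => exact h1 rfl
      | cons a l =>
        cases a with
        | z => exact h3 l rfl
        | o =>
          cases l with
          | nil => exact h2 rfl
          | cons b l =>
            cases b with
            | z =>
              cases m with
              | zero =>
                cases n with
                | zero => simp at hn
                | succ n =>
                  cases n with
                  | zero => simp at hn
                  | succ n => simp [List.replicate_succ] at hn
              | succ m => simp [List.replicate_succ] at hn
            | o => exact h4 l rfl

theorem specialized_parser_language (l : List Sym) :
    (accInit l = true ↔ ∃ m n, l = List.replicate m Sym.z ++ List.replicate n Sym.o) ∧
    (accS l = true ↔ ∃ n, l = List.replicate n Sym.o) :=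
  ⟨accInit_iff l, accS_iff l⟩

end PEpaper
end

section
/- Equivalence of the original grammar-driven parser and the specialized parser: for every string l, the original parser accepts l from the non-terminal init (i.e., Accepts init l holds) if and only if the specialized recognizer accepts it (accInit l = true). -/
namespace PEpaper

inductive NSymbol : Type
  | init : NSymbol
  | S : NSymbol

inductive Accepts : NSymbol → List Sym → Prop
  | init_nil : Accepts .init []
  | S_nil : Accepts .S []
  | init_z {l} : Accepts .init l → Accepts .init (.z :: l)
  | init_o {l} : Accepts .S l → Accepts .init (.o :: l)
  | S_o {l} : Accepts .S l → Accepts .S (.o :: l)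

lemma S_iff (l : List Sym) : Accepts .S l ↔ accS l = true := by
  induction l with
  | nil => simp [accS]; exact .S_nil
  | cons h t ih =>
    cases h with
    | z =>
      simp [accS]
      intro hc; cases hc
    | o =>
      simp [accS, ← ih]
      constructor
      · intro hc; cases hc; assumption
      · exact .S_o

theorem original_iff_specialized (l : List Sym) :
    Accepts .init l ↔ accInit l = true := by
  induction l with
  | nil => simp [accInit]; exact .init_nil
  | cons h t ih =>
    cases h with
    | z =>
      simp [accInit, ← ih]
      constructor
      · intro hc; cases hc; assumption
      · exact .init_z
    | o =>
      cases t with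
      | nil =>
        simp [accInit]
        exact .init_o .S_nil
      | cons h2 t2 =>
        cases h2 with
        | z =>
          simp [accInit]
          intro hc; cases hc with
          | init_o hs => cases hs
        | o =>
          simp [accInit, ← S_iff]
          constructor
          · intro hc; cases hc with
            | init_o hs => cases hs; assumption
          · intro hs; exact .init_o (.S_o hs)

end PEpaper
end

section
/- Language correctness of the original parser with the given right-regular grammar: for every string l, Accepts init l holds if and only if there exist m and n with l = List.replicate m z ++ List.replicate n o; that is, the parser with grammar Γ recognizes exactly the language (0)*(1)* generated by Γ. -/
namespace PEpaper

lemma S_lang {l : List Sym} (h : Accepts .S l) : ∃ n, l = List.replicate n Sym.o := by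
  generalize hN : NSymbol.S = N at h
  induction h with
  | init_nil => cases hN
  | S_nil => exact ⟨0, rfl⟩
  | init_z _ _ => cases hN
  | init_o _ _ => cases hN
  | S_o _ ih =>
    obtain ⟨n, rfl⟩ := ih hN
    exact ⟨n + 1, rfl⟩

lemma S_of_rep (n : ℕ) : Accepts .S (List.replicate n Sym.o) := by
  induction n with
  | zero => exact .S_nil
  | succ n ih => exact .S_o ih

theorem original_parser_language (l : List Sym) :
    Accepts .init l ↔ ∃ m n, l = List.replicate m Sym.z ++ List.replicate n Sym.o := by
  constructor
  · intro h
    generalize hN : NSymbol.init = N at h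
    induction h with
    | init_nil => exact ⟨0, 0, rfl⟩
    | S_nil => cases hN
    | init_z _ ih =>
      obtain ⟨m, n, rfl⟩ := ih hN
      exact ⟨m + 1, n, rfl⟩
    | init_o h _ =>
      obtain ⟨n, rfl⟩ := S_lang h
      exact ⟨0, n + 1, rfl⟩
    | S_o _ _ => cases hN
  · rintro ⟨m, n, rfl⟩
    induction m with
    | zero =>
      simpa using (show Accepts .init (List.replicate n Sym.o) by
        cases n with
        | zero => exact .init_nil
        | succ n => exact .init_o (S_of_rep n))
    | succ m ih => exact .init_z ih

end PEpaper
end
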